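/- arXiv:1509.05181 — 3 statements merged into one kernel-verified Lean document; each statement's English description precedes it below -/
import Mathlib

section
/- Suppose every agent's valuation v_i is multilinear in PoS. Then the PEV mechanism is ex-post truthful: for every efficient allocation choice π*, every family of pivot functions (h_i), every type profile θ = (θ_i)_{i∈N}, every agent i, and every report θ̂_i, one has EU_i(θ_i, θ_i, θ_{-i}) ≥ EU_i(θ_i, θ̂_i, θ_{-i}). -/
/-!
Agent `i`'s PEV utility conditions every valuation on her success or failure and averages the
two with her true PoS. By multilinearity this average is the expected social welfare, under the
true types, of the allocation her report induces, minus a pivot she cannot influence. Reporting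
truthfully makes the mechanism pick that allocation by efficiency, so it maximises her utility
(the VCG argument).
-/

/-- A function `f : (N → ℝ) → ℝ` is multilinear on `[0,1]^N`. -/
def MultilinearOn {N : Type*} [Fintype N] [DecidableEq N] (f : (N → ℝ) → ℝ) : Prop :=
  ∀ p : N → ℝ, (∀ j, 0 ≤ p j ∧ p j ≤ 1) → ∀ j,
    f p = p j * f (Function.update p j 1) + (1 - p j) * f (Function.update p j 0)

/-- A valuation `v : T → (N → ℝ) → ℝ` is multilinear in PoS. -/
def MultilinearInPoS {N T : Type*} [Fintype N] [DecidableEq N]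
    (v : T → (N → ℝ) → ℝ) : Prop :=
  ∀ τ : T, MultilinearOn (v τ)

/-- A type of an agent: a valuation together with a probability-of-success function
with values in `[0,1]`. -/
structure AgentType (N T : Type*) where
  v : T → (N → ℝ) → ℝ
  p : T → ℝ
  hp : ∀ τ, 0 ≤ p τ ∧ p τ ≤ 1

/-- The PoS profile `p^τ` of a type profile `θ` at allocation `τ`. -/
def PoSProfile {N T : Type*} (θ : N → AgentType N T) (τ : T) : N → ℝ :=
  fun j => (θ j).p τ

/-- The expected social welfare of allocation `τ` under type profile `θ`. -/
def SW {N T : Type*} [Fintype N] (θ : N → AgentType N T) (τ : T) : ℝ :=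
  ∑ i, (θ i).v τ (PoSProfile θ τ)

/-- An efficient allocation choice function. -/
def Efficient {N T : Type*} [Fintype N] (π : (N → AgentType N T) → T) : Prop :=
  ∀ θ τ, SW θ τ ≤ SW θ (π θ)

/-- A family of pivot functions `h_i` depends only on the types of agents other than `i`. -/
def PivotIndep {N T : Type*} (h : N → (N → AgentType N T) → ℝ) : Prop :=
  ∀ i θ θ', (∀ j, j ≠ i → θ j = θ' j) → h i θ = h i θ'

/-- Agent `i`'s expected utility in the PEV mechanism when her true type is `θ i`,
she reports `r`, and all other agents have true types `θ` and report truthfully. -/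
noncomputable def EU {N T : Type*} [Fintype N] [DecidableEq N]
    (π : (N → AgentType N T) → T) (h : N → (N → AgentType N T) → ℝ)
    (θ : N → AgentType N T) (i : N) (r : AgentType N T) : ℝ :=
  let τ := π (Function.update θ i r)
  let q := PoSProfile θ τ
  (θ i).p τ *
      ((θ i).v τ (Function.update q i 1) +
        ∑ j ∈ Finset.univ.erase i, (θ j).v τ (Function.update q i 1)) +
    (1 - (θ i).p τ) *
      ((θ i).v τ (Function.update q i 0) +
        ∑ j ∈ Finset.univ.erase i, (θ j).v τ (Function.update q i 0)) -
    h i θ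

theorem MultilinearOn.sum {N ι : Type*} [Fintype N] [DecidableEq N] {s : Finset ι}
    {f : ι → (N → ℝ) → ℝ} (hf : ∀ k ∈ s, MultilinearOn (f k)) :
    MultilinearOn (fun p => ∑ k ∈ s, f k p) := by
  intro p hp j
  simp only [Finset.mul_sum, ← Finset.sum_add_distrib]
  exact Finset.sum_congr rfl fun k hk => hf k hk p hp j

theorem EU_eq_SW_sub {N T : Type*} [Fintype N] [DecidableEq N]
    (π : (N → AgentType N T) → T) (h : N → (N → AgentType N T) → ℝ)
    (θ : N → AgentType N T) (hml : ∀ i, MultilinearInPoS ((θ i).v))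
    (i : N) (r : AgentType N T) :
    EU π h θ i r = SW θ (π (Function.update θ i r)) - h i θ := by
  simp only [EU, SW]
  set τ := π (Function.update θ i r)
  set q := PoSProfile θ τ
  have hsplit :=
    MultilinearOn.sum (s := Finset.univ) (fun j _ => hml j τ) q (fun j => (θ j).hp τ) i
  rw [Finset.add_sum_erase _ (fun j => (θ j).v τ (Function.update q i 1)) (Finset.mem_univ i),
    Finset.add_sum_erase _ (fun j => (θ j).v τ (Function.update q i 0)) (Finset.mem_univ i)]
  exact congrArg (· - h i θ) hsplit.symm

theorem pev_ex_post_truthful_general {N T : Type*} [Fintype N] [DecidableEq N]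
    (π : (N → AgentType N T) → T) (hπ : Efficient π)
    (h : N → (N → AgentType N T) → ℝ)
    (θ : N → AgentType N T) (hml : ∀ i, MultilinearInPoS ((θ i).v))
    (i : N) (r : AgentType N T) :
    EU π h θ i r ≤ EU π h θ i (θ i) := by
  rw [EU_eq_SW_sub π h θ hml, EU_eq_SW_sub π h θ hml, Function.update_eq_self]
  linarith [hπ θ (π (Function.update θ i r))]

/-- if every agent's valuation is multilinear in PoS, then the PEV
mechanism is ex-post truthful. -/
theorem pev_ex_post_truthful {N T : Type*} [Fintype N] [DecidableEq N]
    [Fintype T] [Nonempty T]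
    (π : (N → AgentType N T) → T) (hπ : Efficient π)
    (h : N → (N → AgentType N T) → ℝ) (hh : PivotIndep h)
    (θ : N → AgentType N T) (hml : ∀ i, MultilinearInPoS ((θ i).v))
    (i : N) (r : AgentType N T) :
    EU π h θ i r ≤ EU π h θ i (θ i) :=
  pev_ex_post_truthful_general π hπ h θ hml i r
end

section
/- Let ι and κ be finite types, j₀ ∈ ι, let f : (ι → ℝ) → ℝ be multilinear on [0,1]^ι, and let g : (κ → ℝ) → ℝ be multilinear on [0,1]^κ with 0 ≤ g q ≤ 1 whenever 0 ≤ q k ≤ 1 for all k. Define F : ((ι ⊕ κ) → ℝ) → ℝ by F r = f (Function.update (r ∘ Sum.inl) j₀ (g (r ∘ Sum.inr))), i.e., F is obtained from f by substituting the multilinear function g (in a disjoint set of variables) for the variable j₀. Then F is multilinear on [0,1]^{ι ⊕ κ}. -/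
/-!
On the cube, `F` is affine in each variable `r (inl i)` because `f` is. In a variable
`r (inr k)` it is the composite of the map `c ↦ f (update p j₀ c)`, affine on `[0,1]`, with `g`,
which is affine in that variable and takes values in `[0,1]`; such a composite is again affine.
-/

open Function

theorem update_mem_unitCube {N : Type*} [DecidableEq N] {p : N → ℝ}
    (hp : ∀ j, 0 ≤ p j ∧ p j ≤ 1) (j : N) {c : ℝ} (hc : 0 ≤ c ∧ c ≤ 1) :
    ∀ i, 0 ≤ update p j c i ∧ update p j c i ≤ 1 :=
  (forall_update_iff p (fun _ x => 0 ≤ x ∧ x ≤ 1)).2 ⟨hc, fun i _ => hp i⟩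

namespace MultilinearOn

variable {N : Type*} [Fintype N] [DecidableEq N] {f : (N → ℝ) → ℝ}

theorem apply_update (hf : MultilinearOn f) {p : N → ℝ} (hp : ∀ j, 0 ≤ p j ∧ p j ≤ 1)
    (j : N) {c : ℝ} (hc : 0 ≤ c ∧ c ≤ 1) :
    f (update p j c) = c * f (update p j 1) + (1 - c) * f (update p j 0) := by
  simpa using hf _ (update_mem_unitCube hp j hc) j

theorem comp_update (hf : MultilinearOn f) (j₀ : N) {c : ℝ} (hc : 0 ≤ c ∧ c ≤ 1) :
    MultilinearOn (fun p => f (update p j₀ c)) := by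
  intro p hp i
  dsimp only
  by_cases hi : i = j₀
  · subst hi
    simp only [update_idem]
    ring
  · have h := hf _ (update_mem_unitCube hp j₀ hc) i
    rw [update_comm hi, update_comm hi]
    rwa [update_of_ne hi] at h

theorem comp_of_affine (hf : MultilinearOn f)
    (hf01 : ∀ p : N → ℝ, (∀ j, 0 ≤ p j ∧ p j ≤ 1) → 0 ≤ f p ∧ f p ≤ 1) {φ : ℝ → ℝ}
    (hφ : ∀ c, 0 ≤ c ∧ c ≤ 1 → φ c = c * φ 1 + (1 - c) * φ 0) :
    MultilinearOn (φ ∘ f) := by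
  intro p hp j
  have hp₁ := update_mem_unitCube hp j ⟨zero_le_one, le_rfl⟩
  have hp₀ := update_mem_unitCube hp j ⟨le_rfl, zero_le_one⟩
  simp only [comp_apply]
  rw [hφ _ (hf01 p hp), hφ _ (hf01 _ hp₁), hφ _ (hf01 _ hp₀), hf p hp j]
  ring

end MultilinearOn

/-- substituting a `[0,1]`-valued multilinear function `g` (in a disjoint
set of variables) for one variable of a multilinear function `f` yields a multilinear
function. -/
theorem multilinear_subst {ι κ : Type*} [Fintype ι] [DecidableEq ι]
    [Fintype κ] [DecidableEq κ] (j₀ : ι)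
    (f : (ι → ℝ) → ℝ) (hf : MultilinearOn f)
    (g : (κ → ℝ) → ℝ) (hg : MultilinearOn g)
    (hg01 : ∀ q : κ → ℝ, (∀ k, 0 ≤ q k ∧ q k ≤ 1) → 0 ≤ g q ∧ g q ≤ 1) :
    MultilinearOn (fun r : (ι ⊕ κ) → ℝ =>
      f (Function.update (r ∘ Sum.inl) j₀ (g (r ∘ Sum.inr)))) := by
  intro r hr j
  have hrl : ∀ i, 0 ≤ (r ∘ Sum.inl) i ∧ (r ∘ Sum.inl) i ≤ 1 := fun i => hr _
  have hrr : ∀ k, 0 ≤ (r ∘ Sum.inr) k ∧ (r ∘ Sum.inr) k ≤ 1 := fun k => hr _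
  cases j with
  | inl i =>
    have h := hf.comp_update j₀ (hg01 _ hrr) _ hrl i
    simpa only [update_comp_eq_of_injective _ Sum.inl_injective,
      update_comp_eq_of_forall_ne _ _ fun _ => Sum.inr_ne_inl, comp_apply] using h
  | inr k =>
    have h := hg.comp_of_affine hg01 (fun c hc => hf.apply_update hrl j₀ hc) _ hrr k
    simpa only [update_comp_eq_of_injective _ Sum.inr_injective,
      update_comp_eq_of_forall_ne _ _ fun _ => Sum.inl_ne_inr, comp_apply] using h
end

section
/- The Groves mechanism with h ≡ 0 is not ex-post truthful under execution uncertainty. Concretely, let N = Fin 2 (agents 0 and 1) and T = Fin 2 (allocations τ = 0 and τ' = 1), with true types: v₀ τ p = 0 for all τ, p and p₀ τ = 0 for all τ; v₁ 0 p = p 0 * p 1, v₁ 1 p = p 1, p₁ 0 = 1 and p₁ 1 = 1/2. Then, for every efficient-on-reports allocation choice π*: if both agents report truthfully, the chosen allocation is τ' = 1 and agent 0's Groves utility GU₀ equals 1/2; whereas if agent 0 reports the same valuation but the PoS report p̂₀ with p̂₀ 0 = 3/5 and p̂₀ 1 = 0 (agent 1 truthful), the chosen allocation is τ = 0 and agent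 0's Groves utility equals 3/5 > 1/2, so agent 0 strictly gains by misreporting. -/
/-- Reported social welfare of allocation `τ` under a reported profile. -/
def RSW {N T : Type*} [Fintype N] (θhat : N → AgentType N T) (τ : T) : ℝ :=
  ∑ i, (θhat i).v τ (fun j => (θhat j).p τ)

/-- Agent `i`'s utility in the Groves mechanism with `h ≡ 0`: her true expected
valuation of the chosen allocation (at the true PoS profile) plus the reported
expected welfare of the others (at the reported PoS profile). -/
def GrovesU {N T : Type*} [Fintype N] [DecidableEq N]
    (π : (N → AgentType N T) → T) (θ θhat : N → AgentType N T) (i : N) : ℝ :=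
  let τ := π θhat
  (θ i).v τ (fun j => (θ j).p τ) +
    ∑ j ∈ Finset.univ.erase i, (θhat j).v τ (fun k => (θhat k).p τ)

/-- Agent 0's true type: zero valuation and zero PoS everywhere. -/
noncomputable def agent0 : AgentType (Fin 2) (Fin 2) :=
  ⟨fun _ _ => 0, fun _ => 0, by intro τ; norm_num⟩

/-- Agent 1's true type: `v₁ 0 p = p 0 * p 1`, `v₁ 1 p = p 1`; `p₁ 0 = 1`,
`p₁ 1 = 1/2`. -/
noncomputable def agent1 : AgentType (Fin 2) (Fin 2) :=
  ⟨fun τ p => if τ = 0 then p 0 * p 1 else p 1,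
   fun τ => if τ = 0 then 1 else 1 / 2,
   by intro τ; by_cases h : τ = 0 <;> simp [h] <;> norm_num⟩

/-- The true type profile. -/
noncomputable def trueProfile : Fin 2 → AgentType (Fin 2) (Fin 2) :=
  fun i => if i = 0 then agent0 else agent1

/-- Agent 0's misreport: the same (zero) valuation, but PoS report
`p̂₀ 0 = 3/5`, `p̂₀ 1 = 0`. -/
noncomputable def agent0Mis : AgentType (Fin 2) (Fin 2) :=
  ⟨fun _ _ => 0, fun τ => if τ = 0 then 3 / 5 else 0,
   by intro τ; by_cases h : τ = 0 <;> simp [h] <;> norm_num⟩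

/-!
An agent whose own valuation is identically zero receives, under Groves payments with `h ≡ 0`,
exactly the reported welfare of the chosen allocation. Agent 0 values nothing, but agent 1's
value at allocation `0` scales with agent 0's probability of success. Truthfully agent 0 reports
success probability `0`, so allocation `1` (welfare `1/2`) is chosen; overstating it as `3/5`
makes allocation `0` efficient on reports with welfare `3/5`, which agent 0 then collects.
-/

section Groves

variable {N T : Type*} [Fintype N]

theorem eq_of_forall_rsw_lt {π : (N → AgentType N T) → T}
    (hπ : ∀ θhat τ, RSW θhat τ ≤ RSW θhat (π θhat)) {θhat : N → AgentType N T} {τ₀ : T}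
    (h : ∀ τ, τ ≠ τ₀ → RSW θhat τ < RSW θhat τ₀) : π θhat = τ₀ := by
  by_contra hne
  exact (h _ hne).not_ge (hπ θhat τ₀)

theorem grovesU_eq_add_rsw_sub [DecidableEq N] (π : (N → AgentType N T) → T)
    (θ θhat : N → AgentType N T) (i : N) :
    GrovesU π θ θhat i = (θ i).v (π θhat) (fun j => (θ j).p (π θhat)) + RSW θhat (π θhat) -
      (θhat i).v (π θhat) (fun j => (θhat j).p (π θhat)) := by
  rw [GrovesU, RSW, Finset.sum_erase_eq_sub (Finset.mem_univ i)]
  ring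

theorem grovesU_eq_rsw_of_valuation_eq_zero [DecidableEq N] (π : (N → AgentType N T) → T)
    {θ θhat : N → AgentType N T} {i : N} (hv : ∀ τ q, (θ i).v τ q = 0)
    (hvhat : ∀ τ q, (θhat i).v τ q = 0) :
    GrovesU π θ θhat i = RSW θhat (π θhat) := by
  rw [grovesU_eq_add_rsw_sub, hv, hvhat]
  ring

end Groves

theorem rsw_trueProfile_zero : RSW trueProfile 0 = 0 := by
  simp [RSW, Fin.sum_univ_two, trueProfile, agent0, agent1]

theorem rsw_trueProfile_one : RSW trueProfile 1 = 1 / 2 := by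
  simp [RSW, Fin.sum_univ_two, trueProfile, agent0, agent1]

theorem rsw_update_agent0Mis_zero : RSW (Function.update trueProfile 0 agent0Mis) 0 = 3 / 5 := by
  simp [RSW, Fin.sum_univ_two, trueProfile, agent1, agent0Mis]

theorem rsw_update_agent0Mis_one : RSW (Function.update trueProfile 0 agent0Mis) 1 = 1 / 2 := by
  simp [RSW, Fin.sum_univ_two, trueProfile, agent1, agent0Mis]

/-- the Groves mechanism with `h ≡ 0` is not ex-post truthful under
execution uncertainty: for every efficient-on-reports allocation choice `π*`, under
truthful reports allocation `1` is chosen and agent 0's Groves utility is `1/2`,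
while misreporting `agent0Mis` makes allocation `0` chosen with Groves utility
`3/5 > 1/2`. -/
theorem groves_not_ex_post_truthful
    (π : (Fin 2 → AgentType (Fin 2) (Fin 2)) → Fin 2)
    (hπ : ∀ θhat τ, RSW θhat τ ≤ RSW θhat (π θhat)) :
    (π trueProfile = 1 ∧ GrovesU π trueProfile trueProfile 0 = 1 / 2) ∧
    (π (Function.update trueProfile 0 agent0Mis) = 0 ∧
      GrovesU π trueProfile (Function.update trueProfile 0 agent0Mis) 0 = 3 / 5 ∧
      (1 / 2 : ℝ) < 3 / 5) := by
  have hv : ∀ τ q, (trueProfile 0).v τ q = 0 := fun _ _ => rfl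
  have hvMis : ∀ τ q, (Function.update trueProfile 0 agent0Mis 0).v τ q = 0 := by
    simp [agent0Mis]
  have hTruthful : π trueProfile = 1 :=
    eq_of_forall_rsw_lt hπ <| Fin.forall_fin_two.2
      ⟨fun _ => by rw [rsw_trueProfile_zero, rsw_trueProfile_one]; norm_num, fun h => absurd rfl h⟩
  have hMis : π (Function.update trueProfile 0 agent0Mis) = 0 :=
    eq_of_forall_rsw_lt hπ <| Fin.forall_fin_two.2
      ⟨fun h => absurd rfl h, fun _ => by
        rw [rsw_update_agent0Mis_zero, rsw_update_agent0Mis_one]; norm_num⟩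
  refine ⟨⟨hTruthful, ?_⟩, hMis, ?_, by norm_num⟩
  · rw [grovesU_eq_rsw_of_valuation_eq_zero π hv hv, hTruthful, rsw_trueProfile_one]
  · rw [grovesU_eq_rsw_of_valuation_eq_zero π hv hvMis, hMis, rsw_update_agent0Mis_zero]
end
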